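/- If 𝓕 is a family of subsets of [n] that does not contain the full set [n], then Σ_{F ∈ 𝓕} C(n,|F|)⁻¹·(1 - d⁺(F,𝓕)/(n - |F|)) ≤ 1, where d⁺(F,𝓕) is the number of sets G ∈ 𝓕 with F ⊊ G. -/

import Mathlib

/-- An `(r,k)`-colouring of a family `F` of subsets of `[n]`: an assignment of one of `r`
colours to each member of `F` such that no `k`-chain in `F` is monochromatic. -/
def IsRKColouring {n r : ℕ} (k : ℕ) (F : Finset (Finset (Fin n)))
    (c : {A // A ∈ F} → Fin r) : Prop :=
  ∀ ch : Fin k → {A // A ∈ F},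
    (∀ i j : Fin k, i < j → (ch i : Finset (Fin n)) ⊂ (ch j : Finset (Fin n))) →
    ∃ i j : Fin k, c (ch i) ≠ c (ch j)

/-- The number of `(r,k)`-colourings of the family `F ⊆ 2^[n]`. -/
noncomputable def numColourings (r k n : ℕ) (F : Finset (Finset (Fin n))) : ℕ :=
  Nat.card {c : {A // A ∈ F} → Fin r // IsRKColouring k F c}

/-- `F` contains no `k`-chain. -/
def kChainFree (k : ℕ) {n : ℕ} (F : Finset (Finset (Fin n))) : Prop :=
  ¬ ∃ ch : Fin k → Finset (Fin n), (∀ i, ch i ∈ F) ∧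
      ∀ i j : Fin k, i < j → ch i ⊂ ch j

/-- `m_{k-1}`, the size of the family of all subsets of `[n]` of size between
`⌊(n-k+2)/2⌋` and `⌊(n+k-2)/2⌋`. -/
def mSize (n k : ℕ) : ℕ := ∑ i ∈ Finset.Icc ((n - k + 2) / 2) ((n + k - 2) / 2), n.choose i

/-- `f(r,k;n)`: the maximum number of `(r,k)`-colourings over all families in `2^[n]`. -/
noncomputable def fMax (r k n : ℕ) : ℕ :=
  Finset.sup Finset.univ (fun F : Finset (Finset (Fin n)) => numColourings r k n F)

/-- The number of comparable pairs in a family. -/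
def cpairs {n : ℕ} (F : Finset (Finset (Fin n))) : ℕ :=
  ((F ×ˢ F).filter fun p => p.1 ⊂ p.2).card

/-- The weight `w_k(F)` of a set `F ⊆ [n]`. -/
noncomputable def wk (n k : ℕ) (F : Finset (Fin n)) : ℝ :=
  min ((n.choose F.card : ℝ))⁻¹ ((n.choose ((n - k) / 2) : ℝ))⁻¹

/-- The weight `w_k(𝓕)` of a family `𝓕 ⊆ 2^[n]`. -/
noncomputable def wkFam (n k : ℕ) (F : Finset (Finset (Fin n))) : ℝ :=
  ∑ A ∈ F, wk n k A

/-! Lubell's permutation method. Of the `n!` maximal chains of `2^[n]`, a set `A` of size `a`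
lies on `a! (n-a)!`. Call `A ∈ 𝓕` the top of a chain if no strict superset of `A` in `𝓕` lies on
it; distinct sets are tops of disjoint sets of chains. A set `G ⊋ A` with `G ≠ [n]` lies on at
most `a! (n-a-1)!` of the chains through `A`, so `A` is the top of at least
`a! (n-a)! - d⁺(A,𝓕) a! (n-a-1)! = n! C(n,a)⁻¹ (1 - d⁺(A,𝓕)/(n-a))` chains. -/

open Finset Nat Equiv

section PermCount

variable {α β : Type*} [Fintype α] [DecidableEq α] [Fintype β] [DecidableEq β]

theorem card_perm_comp_eq (f g : α → β)
    (h : ∀ b, Fintype.card {a // f a = b} = Fintype.card {a // g a = b}) :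
    Fintype.card {σ : Perm α // g ∘ σ = f} = ∏ b, (Fintype.card {a // f a = b})! := by
  let τ : Perm α := ofFiberEquiv fun b => Fintype.equivOfCardEq (h b)
  have hτ : g ∘ τ = f := funext (ofFiberEquiv_map _)
  rw [← DomMulAct.stabilizer_card f]
  refine Fintype.card_congr (subtypeEquiv (Equiv.mulLeft τ⁻¹) fun σ => ?_)
  have hcomp : f ∘ (τ⁻¹ * σ : Perm α) = g ∘ σ := by rw [← hτ]; ext; simp
  rw [Equiv.coe_mulLeft, hcomp]

def memPair (A B : Finset α) (x : α) : Bool × Bool := (x ∈ A, x ∈ B)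

theorem card_fiber_memPair {A B : Finset α} (hAB : A ⊆ B) (p q : Bool) :
    Fintype.card {x // memPair A B x = (p, q)} =
      if p then (if q then #A else 0) else (if q then #B - #A else Fintype.card α - #B) := by
  rw [Fintype.card_subtype]
  cases p <;> cases q <;> simp only [memPair, Prod.mk.injEq, decide_eq_true_eq,
    decide_eq_false_iff_not, if_true, Bool.false_eq_true, if_false]
  · rw [← card_compl]
    congr 1
    ext x
    simpa using fun hxB hxA => hxB (hAB hxA)
  · rw [← card_sdiff_of_subset hAB]
    congr 1
    ext
    simp [and_comm]
  · simpa using fun x (hxA : x ∈ A) => hAB hxA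
  · simp [and_iff_left_of_imp (@hAB _)]

theorem card_perm_mapsTo_pair {A B A' B' : Finset α} (hAB : A ⊆ B) (hAB' : A' ⊆ B')
    (hA : #A' = #A) (hB : #B' = #B) :
    #{σ : Perm α | (∀ x, x ∈ A ↔ σ x ∈ A') ∧ ∀ x, x ∈ B ↔ σ x ∈ B'} =
      (#A)! * (#B - #A)! * (Fintype.card α - #B)! := by
  have key := card_perm_comp_eq (memPair A B) (memPair A' B') fun ⟨p, q⟩ => by
    rw [card_fiber_memPair hAB, card_fiber_memPair hAB', hA, hB]
  rw [← Fintype.card_subtype]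
  convert key using 1
  · refine Fintype.card_congr (subtypeEquivRight fun σ => ?_)
    simp [memPair, funext_iff, iff_comm, forall_and]
  · simp only [Fintype.prod_prod_type, Fintype.prod_bool, card_fiber_memPair hAB]
    simp only [if_true, Bool.false_eq_true, if_false, factorial_zero]
    ring

end PermCount

theorem succ_factorial_mul_factorial_le {s t : ℕ} (ht : 1 ≤ t) : (s + 1)! * t ! ≤ (s + t)! := by
  have hchoose : s + 1 ≤ (s + t).choose s := by
    simpa using Nat.choose_le_choose s (show s + 1 ≤ s + t by omega)
  calc (s + 1)! * t ! = (s + 1) * (s ! * t !) := by rw [factorial_succ, mul_assoc]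
    _ ≤ (s + t).choose s * (s ! * t !) := Nat.mul_le_mul_right _ hchoose
    _ = (s + t)! := by
      rw [← mul_assoc, ← Nat.choose_mul_factorial_mul_factorial (le_add_right s t),
        Nat.add_sub_cancel_left]

theorem factorial_mul_choose_inv_mul_one_sub_div {a n : ℕ} (d : ℝ) (h : a < n) :
    (n ! : ℝ) * ((n.choose a : ℝ)⁻¹ * (1 - d / (n - a))) =
      a ! * (n - a)! - d * (a ! * (n - a - 1)!) := by
  have hna : (n : ℝ) - a ≠ 0 := sub_ne_zero.2 (by exact_mod_cast h.ne')
  have hc : (n.choose a : ℝ) ≠ 0 := by exact_mod_cast (Nat.choose_pos h.le).ne'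
  have hfac : ((n - a)! : ℝ) = (n - a) * (n - a - 1)! := by
    rw [← Nat.mul_factorial_pred (by omega : n - a ≠ 0)]
    push_cast [h.le]
    ring
  have hchoose : (n.choose a : ℝ) * (a ! * (n - a)!) = n ! := by
    rw [← mul_assoc]
    exact_mod_cast Nat.choose_mul_factorial_mul_factorial h.le
  rw [← hchoose, hfac]
  field_simp

section Chains

variable {n : ℕ}

def initSeg (n k : ℕ) : Finset (Fin n) := {i | (i : ℕ) < k}

theorem card_initSeg {k : ℕ} (hk : k ≤ n) : #(initSeg n k) = k := by
  rw [initSeg, Fin.card_filter_val_lt, min_eq_right hk]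

theorem initSeg_mono {j k : ℕ} (h : j ≤ k) : initSeg n j ⊆ initSeg n k := by
  intro i hi
  simp only [initSeg, mem_filter, mem_univ, true_and] at hi ⊢
  omega

/-- A permutation `σ` of `Fin n` encodes the maximal chain of sets `σ⁻¹ (initSeg n k)`,
`0 ≤ k ≤ n`. -/
def chainsThrough (A : Finset (Fin n)) : Finset (Perm (Fin n)) :=
  {σ | ∀ x, x ∈ A ↔ σ x ∈ initSeg n #A}

theorem mem_chainsThrough {σ : Perm (Fin n)} {A : Finset (Fin n)} :
    σ ∈ chainsThrough A ↔ ∀ x, x ∈ A ↔ σ x ∈ initSeg n #A := by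
  simp [chainsThrough]

theorem subset_of_mem_chainsThrough {σ : Perm (Fin n)} {A B : Finset (Fin n)}
    (hA : σ ∈ chainsThrough A) (hB : σ ∈ chainsThrough B) (h : #A ≤ #B) : A ⊆ B := fun x hx =>
  (mem_chainsThrough.1 hB x).2 (initSeg_mono h ((mem_chainsThrough.1 hA x).1 hx))

theorem card_chainsThrough_inter {A B : Finset (Fin n)} (hAB : A ⊆ B) :
    #(chainsThrough A ∩ chainsThrough B) = (#A)! * (#B - #A)! * (n - #B)! := by
  have hB : #B ≤ n := card_le_univ B |>.trans_eq (Fintype.card_fin n)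
  have hcount := card_perm_mapsTo_pair hAB (initSeg_mono (card_le_card hAB))
    (card_initSeg ((card_le_card hAB).trans hB)) (card_initSeg hB)
  rw [Fintype.card_fin] at hcount
  rw [← hcount]
  congr 1
  ext σ
  simp [mem_chainsThrough]

theorem card_chainsThrough (A : Finset (Fin n)) : #(chainsThrough A) = (#A)! * (n - #A)! := by
  simpa using card_chainsThrough_inter (subset_refl A)

theorem card_chainsThrough_inter_le {A B : Finset (Fin n)} (hAB : A ⊂ B) (hB : B ≠ univ) :
    #(chainsThrough A ∩ chainsThrough B) ≤ (#A)! * (n - #A - 1)! := by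
  have hab := card_lt_card hAB
  have hbn : #B < n := by simpa using card_lt_card (ssubset_univ_iff.2 hB)
  rw [card_chainsThrough_inter hAB.subset, mul_assoc]
  refine Nat.mul_le_mul_left _ ?_
  obtain ⟨s, hs⟩ : ∃ s, #B - #A = s + 1 := ⟨#B - #A - 1, by omega⟩
  have := succ_factorial_mul_factorial_le (s := s) (t := n - #B) (by omega)
  rwa [← hs, show s + (n - #B) = n - #A - 1 by omega] at this

def chainsWithTop (F : Finset (Finset (Fin n))) (A : Finset (Fin n)) : Finset (Perm (Fin n)) :=
  chainsThrough A \ {G ∈ F | A ⊂ G}.biUnion chainsThrough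

theorem pairwiseDisjoint_chainsWithTop (F : Finset (Finset (Fin n))) :
    (F : Set (Finset (Fin n))).PairwiseDisjoint (chainsWithTop F) := by
  intro A hA B hB hne
  wlog h : #A ≤ #B generalizing A B
  · exact (this hB hA hne.symm (by omega)).symm
  refine disjoint_left.2 fun σ hσA hσB =>
    (mem_sdiff.1 hσA).2 (mem_biUnion.2 ⟨B, mem_filter.2 ⟨hB, ?_⟩, (mem_sdiff.1 hσB).1⟩)
  exact ssubset_of_subset_of_ne
    (subset_of_mem_chainsThrough (mem_sdiff.1 hσA).1 (mem_sdiff.1 hσB).1 h) hne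

theorem card_chainsThrough_le_card_chainsWithTop_add {F : Finset (Finset (Fin n))}
    (hF : univ ∉ F) (A : Finset (Fin n)) :
    #(chainsThrough A) ≤ #(chainsWithTop F A) + #{G ∈ F | A ⊂ G} * ((#A)! * (n - #A - 1)!) := by
  rw [← card_sdiff_add_card_inter (chainsThrough A) ({G ∈ F | A ⊂ G}.biUnion chainsThrough),
    inter_biUnion]
  refine Nat.add_le_add_left (card_biUnion_le.trans ?_) _
  rw [← smul_eq_mul, ← sum_const]
  refine sum_le_sum fun G hG => ?_
  obtain ⟨hGF, hAG⟩ := mem_filter.1 hG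
  exact card_chainsThrough_inter_le hAG (ne_of_mem_of_not_mem hGF hF)

end Chains

/-- LYM-type inequality: if `𝓕 ⊆ 2^[n]` does not contain `[n]`, then
`Σ_{F ∈ 𝓕} C(n,|F|)⁻¹·(1 - d⁺(F,𝓕)/(n-|F|)) ≤ 1`. -/
theorem lym_variant (n : ℕ) (F : Finset (Finset (Fin n)))
    (hF : (Finset.univ : Finset (Fin n)) ∉ F) :
    ∑ A ∈ F, ((n.choose A.card : ℝ))⁻¹ *
      (1 - ((F.filter fun G => A ⊂ G).card : ℝ) / ((n : ℝ) - (A.card : ℝ))) ≤ 1 := by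
  have hn : (0 : ℝ) < n ! := by positivity
  calc _ ≤ ∑ A ∈ F, (#(chainsWithTop F A) : ℝ) / n ! := by
        refine sum_le_sum fun A hA => (le_div_iff₀' hn).2 ?_
        have hA : #A < n := by
          simpa using card_lt_card (ssubset_univ_iff.2 (ne_of_mem_of_not_mem hA hF))
        have hcount := card_chainsThrough_le_card_chainsWithTop_add hF A
        rw [card_chainsThrough] at hcount
        rw [factorial_mul_choose_inv_mul_one_sub_div _ hA, sub_le_iff_le_add]
        exact_mod_cast hcount
    _ = #(F.biUnion (chainsWithTop F)) / n ! := by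
        rw [card_biUnion (pairwiseDisjoint_chainsWithTop F), ← sum_div]
        push_cast
        rfl
    _ ≤ 1 := by
        refine div_le_one_of_le₀ ?_ hn.le
        simpa [Fintype.card_perm] using card_le_univ (F.biUnion (chainsWithTop F))
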